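/- Let φ be an Orlicz function such that ∑_{n=n₁}^∞ φ(1/n) < ∞ for some n₁ ∈ ℕ. Then A_φ is separable with respect to the Luxemburg norm: there exists a countable set D ⊆ A_φ such that for every x ∈ A_φ and every ε > 0 there is d ∈ D with ‖x − d‖_φ < ε. -/

import Mathlib

open scoped ENNReal
open Filter

/-- An Orlicz function: `φ : ℝ → [0,∞]` even, convex, left continuous on `ℝ₊`,
continuous at zero, with `φ 0 = 0` and `φ u → ∞` as `u → ∞`. -/
structure OrliczFunction where
  toFun : ℝ → ℝ≥0∞
  even' : ∀ u : ℝ, toFun (-u) = toFun u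
  convex' : ∀ u v t : ℝ, 0 ≤ t → t ≤ 1 →
    toFun (t * u + (1 - t) * v) ≤ ENNReal.ofReal t * toFun u + ENNReal.ofReal (1 - t) * toFun v
  map_zero' : toFun 0 = 0
  leftContinuous' : ∀ t : ℝ, 0 < t → Tendsto toFun (nhdsWithin t (Set.Iio t)) (nhds (toFun t))
  continuousAtZero' : Tendsto toFun (nhds 0) (nhds 0)
  tendsto_top' : Tendsto toFun atTop (nhds ⊤)

/-- The Cesàro mean `σx(n) = (1/n) ∑_{j=1}^n |x j|` (with `0`-based indexing). -/
noncomputable def cesaroMean (x : ℕ → ℝ) (n : ℕ) : ℝ :=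
  (∑ j ∈ Finset.range (n + 1), |x j|) / (n + 1)

/-- The modular `ρ_φ(x) = ∑_i φ(σx(i))`. -/
noncomputable def rho (φ : OrliczFunction) (x : ℕ → ℝ) : ℝ≥0∞ :=
  ∑' n : ℕ, φ.toFun (cesaroMean x n)

/-- The Cesàro–Orlicz sequence space `ces_φ`. -/
def cesOrlicz (φ : OrliczFunction) : Set (ℕ → ℝ) :=
  {x | ∃ lam : ℝ, 0 < lam ∧ rho φ (fun i => lam * x i) < ⊤}

/-- The Luxemburg norm `‖x‖_φ = inf {λ > 0 : ρ_φ(x/λ) ≤ 1}`. -/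
noncomputable def luxNorm (φ : OrliczFunction) (x : ℕ → ℝ) : ℝ :=
  sInf {lam : ℝ | 0 < lam ∧ rho φ (fun i => x i / lam) ≤ 1}

/-- The subspace `A_φ` of `ces_φ`. -/
def Aphi (φ : OrliczFunction) : Set (ℕ → ℝ) :=
  {x | x ∈ cesOrlicz φ ∧ ∀ k : ℝ, 0 < k → ∃ nk : ℕ,
    ∑' n : ℕ, φ.toFun ((k / ((nk + n + 1 : ℕ) : ℝ)) * ∑ i ∈ Finset.range (nk + n + 1), |x i|) < ⊤}

/-- `∃ n₁, ∑_{n=n₁}^∞ φ(1/n) < ∞`. -/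
def TailFinite (φ : OrliczFunction) : Prop :=
  ∃ n₁ : ℕ, ∑' n : ℕ, φ.toFun (((n₁ + n + 1 : ℕ) : ℝ)⁻¹) < ⊤

/-- The `Δ₂`-condition at zero. -/
def Delta2Zero (φ : OrliczFunction) : Prop :=
  ∃ K : ℝ, 0 < K ∧ ∃ a : ℝ, 0 < a ∧ 0 < φ.toFun a ∧
    ∀ u : ℝ, 0 ≤ u → u ≤ a → φ.toFun (2 * u) ≤ ENNReal.ofReal K * φ.toFun u

/-- `φ` takes only finite values. -/
def FiniteValued (φ : OrliczFunction) : Prop := ∀ u : ℝ, φ.toFun u ≠ ⊤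

/-!
If `A_φ` contains some `x ≠ 0`, comparing the series defining `A_φ` at `x` with the single term
`|x i₀|` shows that `∑_{n ≥ N} φ(c/n) < ∞` for every `c > 0`; otherwise `A_φ = {0}`. Under this
condition every sequence with bounded partial sums of `|y j|` lies in `A_φ`, and the finitely
supported rational sequences are dense: for `λ > 0` the modular of `2x·1_{[M,∞)}/λ` is bounded by
a tail of the convergent series defining `A_φ`, while a rational approximation of `x` on `[0, M)`
whose error has `ℓ¹`-mass `δ` contributes at most `∑ φ(2δ/(λn))`, small for small `δ`. Since
`φ(a + b) ≤ φ(2a) + φ(2b)`, the two estimates give `ρ((x - d)/λ) ≤ 1`, i.e. `‖x - d‖_φ ≤ λ`.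
-/

open Finset Topology

namespace OrliczFunction

variable (φ : OrliczFunction)

lemma apply_mul_le {t : ℝ} (u : ℝ) (ht₀ : 0 ≤ t) (ht₁ : t ≤ 1) :
    φ.toFun (t * u) ≤ ENNReal.ofReal t * φ.toFun u := by
  simpa [φ.map_zero'] using φ.convex' u 0 t ht₀ ht₁

lemma monotoneOn : MonotoneOn φ.toFun (Set.Ici 0) := by
  intro s hs t _ hst
  rcases (show (0 : ℝ) ≤ s from hs).eq_or_lt' with rfl | hs
  · simp [φ.map_zero']
  have ht : 0 < t := hs.trans_le hst
  calc φ.toFun s = φ.toFun (s / t * t) := by rw [div_mul_cancel₀ _ ht.ne']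
    _ ≤ ENNReal.ofReal (s / t) * φ.toFun t :=
      φ.apply_mul_le t (div_nonneg hs.le ht.le) (div_le_one_of_le₀ hst ht.le)
    _ ≤ φ.toFun t :=
      mul_le_of_le_one_left' (ENNReal.ofReal_le_one.2 (div_le_one_of_le₀ hst ht.le))

lemma apply_add_le (a b : ℝ) : φ.toFun (a + b) ≤ φ.toFun (2 * a) + φ.toFun (2 * b) := by
  have h := φ.convex' (2 * a) (2 * b) (1 / 2) (by norm_num) (by norm_num)
  rw [show (1 / 2 : ℝ) * (2 * a) + (1 - 1 / 2) * (2 * b) = a + b by ring] at h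
  refine h.trans (add_le_add ?_ ?_) <;>
    exact mul_le_of_le_one_left' (ENNReal.ofReal_le_one.2 (by norm_num))

lemma tsum_apply_mul_le {t : ℝ} (u : ℕ → ℝ) (ht₀ : 0 ≤ t) (ht₁ : t ≤ 1) :
    ∑' n, φ.toFun (t * u n) ≤ ENNReal.ofReal t * ∑' n, φ.toFun (u n) := by
  rw [← ENNReal.tsum_mul_left]
  exact ENNReal.tsum_le_tsum fun n => φ.apply_mul_le (u n) ht₀ ht₁

end OrliczFunction

lemma cesaroMean_nonneg (y : ℕ → ℝ) (n : ℕ) : 0 ≤ cesaroMean y n := by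
  unfold cesaroMean; positivity

lemma cesaroMean_mul (c : ℝ) (y : ℕ → ℝ) (n : ℕ) :
    cesaroMean (fun i => c * y i) n = |c| * cesaroMean y n := by
  simp only [cesaroMean, abs_mul, ← mul_sum, mul_div_assoc]

lemma cesaroMean_add_le (a b : ℕ → ℝ) (n : ℕ) :
    cesaroMean (fun i => a i + b i) n ≤ cesaroMean a n + cesaroMean b n := by
  rw [cesaroMean, cesaroMean, cesaroMean, ← add_div, ← sum_add_distrib]
  gcongr with i
  exact abs_add_le _ _

lemma rho_add_le (φ : OrliczFunction) (a b : ℕ → ℝ) :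
    rho φ (fun i => a i + b i) ≤ rho φ (fun i => 2 * a i) + rho φ (fun i => 2 * b i) := by
  rw [rho, rho, rho, ← ENNReal.tsum_add]
  refine ENNReal.tsum_le_tsum fun n => ?_
  rw [cesaroMean_mul, cesaroMean_mul, abs_two]
  exact (φ.monotoneOn (cesaroMean_nonneg _ n)
    (add_nonneg (cesaroMean_nonneg a n) (cesaroMean_nonneg b n))
    (cesaroMean_add_le a b n)).trans (φ.apply_add_le _ _)

lemma rho_le_tsum_of_sum_abs_le (φ : OrliczFunction) {y : ℕ → ℝ} {B : ℝ}
    (hB : ∀ t, ∑ j ∈ range t, |y j| ≤ B) :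
    rho φ y ≤ ∑' n : ℕ, φ.toFun (B / ((n : ℝ) + 1)) :=
  ENNReal.tsum_le_tsum fun n => φ.monotoneOn (cesaroMean_nonneg y n)
    (div_nonneg ((sum_nonneg fun j _ => abs_nonneg (y j)).trans (hB 0)) (by positivity))
    (div_le_div_of_nonneg_right (hB (n + 1)) (by positivity))

lemma luxNorm_le (φ : OrliczFunction) {y : ℕ → ℝ} {lam : ℝ} (hlam : 0 < lam)
    (h : rho φ (fun i => y i / lam) ≤ 1) : luxNorm φ y ≤ lam :=
  csInf_le ⟨0, fun _ hb => hb.1.le⟩ ⟨hlam, h⟩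

lemma luxNorm_zero (φ : OrliczFunction) : luxNorm φ (fun _ => 0) = 0 := by
  have : {lam : ℝ | 0 < lam ∧ rho φ (fun _ => 0 / lam) ≤ 1} = Set.Ioi 0 := by
    ext lam
    simp [rho, cesaroMean, φ.map_zero']
  rw [luxNorm, this, csInf_Ioi]

lemma sum_range_abs_le_of_eq_zero {y : ℕ → ℝ} {M : ℕ} (hy : ∀ j, M ≤ j → y j = 0) (t : ℕ) :
    ∑ j ∈ range t, |y j| ≤ ∑ j ∈ range M, |y j| := by
  calc ∑ j ∈ range t, |y j| ≤ ∑ j ∈ range (max t M), |y j| :=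
        sum_le_sum_of_subset_of_nonneg (range_mono (le_max_left t M)) fun j _ _ => abs_nonneg _
    _ = ∑ j ∈ range M, |y j| := by
        refine (sum_subset (range_mono (le_max_right t M)) fun j _ hj => ?_).symm
        rw [hy j (not_lt.1 (mem_range.not.1 hj)), abs_zero]

def ScaledTailFinite (φ : OrliczFunction) : Prop :=
  ∀ c : ℝ, 0 < c → ∃ N : ℕ, ∑' n : ℕ, φ.toFun (c / ((N + n + 1 : ℕ) : ℝ)) < ⊤

lemma scaledTailFinite_of_mem_Aphi {φ : OrliczFunction} {x : ℕ → ℝ} (hx : x ∈ Aphi φ)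
    (hx0 : x ≠ 0) : ScaledTailFinite φ := by
  obtain ⟨i₀, hi₀⟩ := Function.ne_iff.1 hx0
  have ha : 0 < |x i₀| := abs_pos.2 hi₀
  intro c hc
  obtain ⟨m, hm⟩ := hx.2 (c / |x i₀|) (div_pos hc ha)
  refine ⟨m + i₀, lt_of_le_of_lt ((ENNReal.tsum_le_tsum fun n => ?_).trans
    (ENNReal.tsum_comp_le_tsum_of_injective (add_left_injective i₀) _)) hm⟩
  rw [show m + i₀ + n + 1 = m + (n + i₀) + 1 by omega]
  refine φ.monotoneOn (Set.mem_Ici.2 (by positivity)) (Set.mem_Ici.2 (by positivity)) ?_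
  have : |x i₀| ≤ ∑ i ∈ range (m + (n + i₀) + 1), |x i| :=
    single_le_sum (fun i _ => abs_nonneg (x i)) (mem_range.2 (by omega))
  calc c / ((m + (n + i₀) + 1 : ℕ) : ℝ)
      = c / |x i₀| / ((m + (n + i₀) + 1 : ℕ) : ℝ) * |x i₀| := by field_simp
    _ ≤ _ := by gcongr

lemma tendsto_rho_indicator_Ici {φ : OrliczFunction} {x : ℕ → ℝ} (hx : x ∈ Aphi φ) {k : ℝ}
    (hk : 0 < k) :
    Tendsto (fun M => rho φ (fun j => k * (Set.Ici M).indicator x j)) atTop (𝓝 0) := by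
  obtain ⟨m, hm⟩ := hx.2 k hk
  set f : ℕ → ℝ≥0∞ := fun n =>
    φ.toFun (k / ((m + n + 1 : ℕ) : ℝ) * ∑ i ∈ range (m + n + 1), |x i|)
  refine tendsto_of_tendsto_of_tendsto_of_le_of_le' tendsto_const_nhds
    ((ENNReal.tendsto_sum_nat_add f hm.ne).comp (tendsto_sub_atTop_nat m))
    (Eventually.of_forall fun _ => zero_le) ((eventually_ge_atTop m).mono fun M hM => ?_)
  calc rho φ (fun j => k * (Set.Ici M).indicator x j)
      = ∑' n, φ.toFun (cesaroMean (fun j => k * (Set.Ici M).indicator x j) (n + M)) := by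
        rw [rho, ← ENNReal.summable.sum_add_tsum_nat_add' (k := M), sum_eq_zero, zero_add]
        intro n hn
        rw [cesaroMean, sum_eq_zero, zero_div, φ.map_zero']
        intro j hj
        have hjM : j ∉ Set.Ici M := by
          simp only [mem_range, Set.mem_Ici, not_le] at hn hj ⊢
          omega
        rw [Set.indicator_of_notMem hjM, mul_zero, abs_zero]
    _ ≤ ∑' n, f (n + (M - m)) := ENNReal.tsum_le_tsum fun n => ?_
  show _ ≤ φ.toFun (k / ((m + (n + (M - m)) + 1 : ℕ) : ℝ) * _)
  rw [show m + (n + (M - m)) + 1 = n + M + 1 by omega]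
  refine φ.monotoneOn (cesaroMean_nonneg _ _) (Set.mem_Ici.2 (by positivity)) ?_
  rw [cesaroMean_mul, abs_of_pos hk, cesaroMean, div_mul_eq_mul_div, mul_div_assoc]
  push_cast
  refine mul_le_mul_of_nonneg_left (div_le_div_of_nonneg_right (sum_le_sum fun j _ => ?_)
    (by positivity)) hk.le
  by_cases hj : j ∈ Set.Ici M <;> simp [hj]

lemma exists_rat_finsupp_sum_abs_sub_le (x : ℕ → ℝ) (M : ℕ) {η : ℝ} (hη : 0 < η) :
    ∃ q : ℕ →₀ ℚ, ∀ t, ∑ j ∈ range t, |(Set.Iio M).indicator x j - q j| ≤ η := by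
  choose r hr using fun j => exists_rat_near (x j) (show 0 < η / (M + 1) by positivity)
  let q : ℕ →₀ ℚ := Finsupp.onFinset (range M) (fun j => if j < M then r j else 0)
    fun j hj => mem_range.2 (by by_contra hjM; simp [hjM] at hj)
  have hq : ∀ j, (Set.Iio M).indicator x j - q j = if j < M then x j - r j else 0 := by
    intro j
    by_cases hj : j < M <;> simp [q, hj]
  refine ⟨q, fun t => (sum_range_abs_le_of_eq_zero (M := M) (fun j hj => ?_) t).trans ?_⟩
  · rw [hq, if_neg (by omega)]
  calc ∑ j ∈ range M, |(Set.Iio M).indicator x j - q j| ≤ ∑ _j ∈ range M, η / (M + 1) :=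
        sum_le_sum fun j hj => by rw [hq, if_pos (mem_range.1 hj)]; exact (hr j).le
    _ = M / (M + 1) * η := by rw [sum_const, card_range, nsmul_eq_mul]; ring
    _ ≤ η := mul_le_of_le_one_left hη.le ((div_le_one (by positivity)).2 (by linarith))

namespace ScaledTailFinite

variable {φ : OrliczFunction}

lemma exists_pos_tsum_lt_top (h : ScaledTailFinite φ) :
    ∃ c > 0, ∑' n : ℕ, φ.toFun (c / ((n : ℝ) + 1)) < ⊤ := by
  obtain ⟨N, hN⟩ := h 1 one_pos
  refine ⟨1 / ((N : ℝ) + 1), by positivity, lt_of_le_of_lt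
    (ENNReal.tsum_le_tsum fun n => φ.monotoneOn (Set.mem_Ici.2 (by positivity))
      (Set.mem_Ici.2 (by positivity)) ?_) hN⟩
  rw [div_div, one_div_le_one_div (by positivity) (by positivity)]
  push_cast
  nlinarith [(Nat.cast_nonneg n : (0 : ℝ) ≤ n), (Nat.cast_nonneg N : (0 : ℝ) ≤ N)]

lemma exists_pos_tsum_le (h : ScaledTailFinite φ) {η : ℝ≥0∞} (hη : η ≠ 0) :
    ∃ B > 0, ∑' n : ℕ, φ.toFun (B / ((n : ℝ) + 1)) ≤ η := by
  obtain ⟨c, hc, hC⟩ := h.exists_pos_tsum_lt_top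
  obtain ⟨s, hs, hsC⟩ := ENNReal.exists_nnreal_pos_mul_lt hC.ne hη
  set t := min (s : ℝ) 1
  refine ⟨t * c, by positivity, ?_⟩
  simp_rw [mul_div_assoc]
  calc ∑' n : ℕ, φ.toFun (t * (c / ((n : ℝ) + 1)))
      ≤ ENNReal.ofReal t * ∑' n : ℕ, φ.toFun (c / ((n : ℝ) + 1)) :=
        φ.tsum_apply_mul_le _ (by positivity) (min_le_right _ _)
    _ ≤ s * ∑' n : ℕ, φ.toFun (c / ((n : ℝ) + 1)) := by
        gcongr
        exact (ENNReal.ofReal_le_ofReal (min_le_left _ _)).trans_eq (ENNReal.ofReal_coe_nnreal)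
    _ ≤ η := hsC.le

lemma mem_Aphi_of_sum_abs_le (h : ScaledTailFinite φ) {y : ℕ → ℝ} {B : ℝ}
    (hB : ∀ t, ∑ j ∈ range t, |y j| ≤ B) : y ∈ Aphi φ := by
  have hB₀ : 0 ≤ B := by simpa using hB 0
  obtain ⟨c, hc, hC⟩ := h.exists_pos_tsum_lt_top
  refine ⟨⟨c / (B + 1), by positivity, ?_⟩, fun k hk => ?_⟩
  · refine (rho_le_tsum_of_sum_abs_le φ fun t => ?_).trans_lt hC
    simp only [abs_mul, ← mul_sum, abs_of_pos (show 0 < c / (B + 1) by positivity)]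
    calc c / (B + 1) * ∑ j ∈ range t, |y j| ≤ c / (B + 1) * (B + 1) := by
          gcongr; linarith [hB t]
      _ = c := by field_simp
  · obtain ⟨N, hN⟩ := h (k * (B + 1)) (by positivity)
    refine ⟨N, lt_of_le_of_lt (ENNReal.tsum_le_tsum fun n => φ.monotoneOn
      (Set.mem_Ici.2 (by positivity)) (Set.mem_Ici.2 (by positivity)) ?_) hN⟩
    rw [div_mul_eq_mul_div]
    gcongr
    linarith [hB (N + n + 1)]

lemma rat_finsupp_mem_Aphi (h : ScaledTailFinite φ) (q : ℕ →₀ ℚ) :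
    (fun i => (q i : ℝ)) ∈ Aphi φ := by
  obtain ⟨M, hM⟩ := q.support.exists_nat_subset_range
  refine h.mem_Aphi_of_sum_abs_le (sum_range_abs_le_of_eq_zero (M := M) fun j hj => ?_)
  have : j ∉ q.support := fun hq => by simpa using (mem_range.1 (hM hq)).trans_le hj
  simp [Finsupp.notMem_support_iff.1 this]

lemma exists_rat_finsupp_rho_sub_div_le (h : ScaledTailFinite φ)
    {x : ℕ → ℝ} (hx : x ∈ Aphi φ) {lam : ℝ} (hlam : 0 < lam) :
    ∃ q : ℕ →₀ ℚ, rho φ (fun i => (x i - q i) / lam) ≤ 1 := by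
  obtain ⟨M, hM⟩ := ((tendsto_rho_indicator_Ici hx (k := 2 / lam) (by positivity)).eventually
    (ge_mem_nhds (ENNReal.inv_pos.2 (ENNReal.ofNat_ne_top (n := 2))))).exists
  obtain ⟨B, hB, hBle⟩ := h.exists_pos_tsum_le (η := 2⁻¹) (by simp)
  obtain ⟨q, hq⟩ := exists_rat_finsupp_sum_abs_sub_le x M (η := lam * B / 2) (by positivity)
  have hsplit : (fun i => (x i - q i) / lam) = fun i =>
      lam⁻¹ * (Set.Ici M).indicator x i + lam⁻¹ * ((Set.Iio M).indicator x i - q i) := by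
    funext i
    simp only [Set.indicator_apply, Set.mem_Ici, Set.mem_Iio]
    split_ifs <;> first | omega | ring
  refine ⟨q, ?_⟩
  calc rho φ (fun i => (x i - q i) / lam)
      ≤ rho φ (fun i => 2 * (lam⁻¹ * (Set.Ici M).indicator x i))
        + rho φ (fun i => 2 * (lam⁻¹ * ((Set.Iio M).indicator x i - q i))) :=
        hsplit ▸ rho_add_le φ _ _
    _ ≤ 2⁻¹ + 2⁻¹ := by
        gcongr
        · simpa only [← mul_assoc, ← div_eq_mul_inv] using hM
        · refine (rho_le_tsum_of_sum_abs_le φ (B := B) fun t => ?_).trans hBle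
          simp only [abs_mul, ← mul_sum, abs_two, abs_inv, abs_of_pos hlam]
          calc 2 * (lam⁻¹ * ∑ j ∈ range t, |(Set.Iio M).indicator x j - q j|)
              ≤ 2 * (lam⁻¹ * (lam * B / 2)) := by gcongr; exact hq t
            _ = B := by field_simp
    _ = 1 := ENNReal.inv_two_add_inv_two

end ScaledTailFinite

theorem stmt_5_general (φ : OrliczFunction) :
    ∃ D : Set (ℕ → ℝ), D.Countable ∧ D ⊆ Aphi φ ∧
      ∀ x ∈ Aphi φ, ∀ ε : ℝ, 0 < ε → ∃ d ∈ D, luxNorm φ (fun i => x i - d i) < ε := by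
  refine ⟨Set.range (fun (q : ℕ →₀ ℚ) i => (q i : ℝ)) ∩ Aphi φ,
    (Set.countable_range _).mono Set.inter_subset_left, Set.inter_subset_right, ?_⟩
  intro x hx ε hε
  rcases eq_or_ne x 0 with rfl | hx0
  · refine ⟨0, ⟨⟨0, by ext; simp⟩, hx⟩, ?_⟩
    simpa [luxNorm_zero] using hε
  have h := scaledTailFinite_of_mem_Aphi hx hx0
  obtain ⟨q, hq⟩ := h.exists_rat_finsupp_rho_sub_div_le hx (half_pos hε)
  exact ⟨_, ⟨⟨q, rfl⟩, h.rat_finsupp_mem_Aphi q⟩,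
    (luxNorm_le φ (half_pos hε) hq).trans_lt (half_lt_self hε)⟩

/-- `A_φ` is separable with respect to the Luxemburg norm. -/
theorem stmt_5 (φ : OrliczFunction) (htail : TailFinite φ) :
    ∃ D : Set (ℕ → ℝ), D.Countable ∧ D ⊆ Aphi φ ∧
      ∀ x ∈ Aphi φ, ∀ ε : ℝ, 0 < ε → ∃ d ∈ D, luxNorm φ (fun i => x i - d i) < ε :=
  stmt_5_general φ
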